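/- Let H be a complex Hilbert space and suppose T, P ∈ B(H) are such that the power sequence {T^n} converges weakly to P and T is a numerical contraction, i.e., |⟨T x, x⟩| ≤ ‖x‖² for every x ∈ H. Then P is the orthogonal projection of H onto ker(I − T), the subspace ker(I − T) reduces T, and ker(I − T) = ker(I − T*). -/

import Mathlib

/-!
`A = 1 - T` is accretive (`0 ≤ Re ⟪A y, y⟫`), and for an accretive operator `A x = 0` forces
`A* x = 0`: with `A x = 0`, `Re ⟪A (x + t y), x + t y⟫ ≥ 0` is a quadratic in the real `t` without
constant term, so its linear coefficient `Re ⟪y, A* x⟫` vanishes. Hence `T` and `T*` have the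
same fixed points.

The weak limit `P` satisfies `T P = P` (shift the index) and fixes every fixed point of `T`, so it
is an idempotent onto `ker (1 - T)`. The powers of `T*` converge weakly to `P*`, so `P*` fixes the
range of `P`, i.e. `P* P = P`, and taking adjoints gives `P* = P`.
-/

open Filter Topology

open scoped InnerProduct InnerProductSpace

namespace ContinuousLinearMap

section

variable {R M : Type*} [Ring R] [TopologicalSpace M] [AddCommGroup M] [IsTopologicalAddGroup M]
  [Module R M]

theorem mem_ker_one_sub_iff {T : M →L[R] M} {x : M} :
    x ∈ LinearMap.ker ((1 - T : M →L[R] M) : M →ₗ[R] M) ↔ T x = x := by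
  rw [LinearMap.mem_ker, coe_coe, sub_apply, one_apply_eq_self, sub_eq_zero, eq_comm]

theorem pow_apply_eq_self {T : M →L[R] M} {x : M} (hx : T x = x) (n : ℕ) : (T ^ n) x = x := by
  induction n with
  | zero => rfl
  | succ n ih => simp [pow_succ, hx, ih]

end

section

variable {𝕜 E : Type*} [RCLike 𝕜] [NormedAddCommGroup E] [InnerProductSpace 𝕜 E] [CompleteSpace E]

theorem adjoint_apply_eq_zero_of_accretive {A : E →L[𝕜] E}
    (hA : ∀ y, 0 ≤ RCLike.re ⟪A y, y⟫_𝕜) {x : E} (hx : A x = 0) : adjoint A x = 0 := by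
  have hquad : ∀ y, RCLike.re ⟪y, adjoint A x⟫_𝕜 = 0 := by
    intro y
    have key : ∀ t : ℝ, 0 ≤ RCLike.re ⟪A y, y⟫_𝕜 * (t * t) + RCLike.re ⟪A y, x⟫_𝕜 * t + 0 := by
      intro t
      have := hA (x + (t : 𝕜) • y)
      simp only [map_add, map_smul, hx, zero_add, inner_add_right, inner_smul_left,
        inner_smul_right, RCLike.conj_ofReal, RCLike.re_ofReal_mul] at this
      linarith
    have := discrim_le_zero key
    rw [discrim, mul_zero, sub_zero] at this
    rw [adjoint_inner_right]
    exact pow_eq_zero_iff two_ne_zero |>.mp (le_antisymm this (sq_nonneg _))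
  simpa [inner_self_eq_norm_sq] using hquad (adjoint A x)

theorem re_inner_adjoint_apply_self (T : E →L[𝕜] E) (x : E) :
    RCLike.re ⟪adjoint T x, x⟫_𝕜 = RCLike.re ⟪T x, x⟫_𝕜 := by
  rw [adjoint_inner_left, ← inner_conj_symm, RCLike.conj_re]

theorem adjoint_apply_eq_self_of_apply_eq_self {T : E →L[𝕜] E}
    (hT : ∀ y, RCLike.re ⟪T y, y⟫_𝕜 ≤ ‖y‖ ^ 2) {x : E} (hx : T x = x) : adjoint T x = x := by
  have hA : ∀ y, 0 ≤ RCLike.re ⟪(1 - T) y, y⟫_𝕜 := fun y => by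
    simpa [inner_sub_left, inner_self_eq_norm_sq] using hT y
  have := adjoint_apply_eq_zero_of_accretive hA (x := x) (by simp [hx])
  rwa [map_sub, adjoint_one, sub_apply, one_apply_eq_self, sub_eq_zero, eq_comm] at this

theorem adjoint_apply_eq_self_iff {T : E →L[𝕜] E}
    (hT : ∀ y, RCLike.re ⟪T y, y⟫_𝕜 ≤ ‖y‖ ^ 2) {x : E} : adjoint T x = x ↔ T x = x := by
  refine ⟨fun hx => ?_, adjoint_apply_eq_self_of_apply_eq_self hT⟩
  have hT' : ∀ y, RCLike.re ⟪adjoint T y, y⟫_𝕜 ≤ ‖y‖ ^ 2 := fun y =>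
    re_inner_adjoint_apply_self T y ▸ hT y
  simpa using adjoint_apply_eq_self_of_apply_eq_self hT' hx

end

section

variable {𝕜 E : Type*} [RCLike 𝕜] [NormedAddCommGroup E] [InnerProductSpace 𝕜 E]

def WeakPowLimit (T P : E →L[𝕜] E) : Prop :=
  ∀ x y : E, Tendsto (fun n : ℕ => ⟪(T ^ n) x, y⟫_𝕜) atTop (𝓝 ⟪P x, y⟫_𝕜)

namespace WeakPowLimit

variable {T P : E →L[𝕜] E}

theorem apply_eq_self (hP : WeakPowLimit T P) {x : E} (hx : T x = x) : P x = x :=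
  ext_inner_right 𝕜 fun y =>
    tendsto_nhds_unique (hP x y) (by simp only [pow_apply_eq_self hx]; exact tendsto_const_nhds)

variable [CompleteSpace E]

theorem apply_map_eq (hP : WeakPowLimit T P) (x : E) : T (P x) = P x := by
  refine ext_inner_right 𝕜 fun y => ?_
  rw [← adjoint_inner_right]
  refine tendsto_nhds_unique (hP x (adjoint T y)) ?_
  simp only [adjoint_inner_right, ← mul_apply_eq_comp, ← pow_succ']
  exact (hP x y).comp (tendsto_add_atTop_nat 1)

theorem comp_self (hP : WeakPowLimit T P) : P ∘L P = P :=
  ext fun x => hP.apply_eq_self (hP.apply_map_eq x)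

theorem range_eq_ker_one_sub (hP : WeakPowLimit T P) :
    LinearMap.range (P : E →ₗ[𝕜] E) = LinearMap.ker ((1 - T : E →L[𝕜] E) : E →ₗ[𝕜] E) := by
  ext x
  rw [mem_ker_one_sub_iff]
  constructor
  · rintro ⟨x, rfl⟩
    exact hP.apply_map_eq x
  · exact fun hx => ⟨x, hP.apply_eq_self hx⟩

theorem adjoint (hP : WeakPowLimit T P) : WeakPowLimit (adjoint T) (adjoint P) := by
  intro x y
  have hpow (n : ℕ) : ContinuousLinearMap.adjoint T ^ n = ContinuousLinearMap.adjoint (T ^ n) := by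
    simp only [← star_eq_adjoint, star_pow]
  simp only [hpow, adjoint_inner_left, ← inner_conj_symm x, starRingEnd_apply]
  exact (hP y x).star

theorem adjoint_eq_self (hP : WeakPowLimit T P)
    (hfix : ∀ x, T x = x → ContinuousLinearMap.adjoint T x = x) :
    ContinuousLinearMap.adjoint P = P := by
  have hP' : ContinuousLinearMap.adjoint P ∘L P = P :=
    ext fun x => hP.adjoint.apply_eq_self (hfix _ (hP.apply_map_eq x))
  calc ContinuousLinearMap.adjoint P
      = ContinuousLinearMap.adjoint (ContinuousLinearMap.adjoint P ∘L P) := by rw [hP']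
    _ = ContinuousLinearMap.adjoint P ∘L P := by rw [adjoint_comp, adjoint_adjoint]
    _ = P := hP'

end WeakPowLimit

end

end ContinuousLinearMap

open ContinuousLinearMap in
/-- If `{T^n}` converges weakly to `P` and `T` is a numerical contraction
(`|⟨T x, x⟩| ≤ ‖x‖²` for all `x`), then `P` is the orthogonal projection of `H` onto
`ker (I - T)`, `ker (I - T)` reduces `T`, and `ker (I - T) = ker (I - T*)`. -/
theorem stmt17 {H : Type*} [NormedAddCommGroup H] [InnerProductSpace ℂ H] [CompleteSpace H]
    (T P : H →L[ℂ] H)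
    (hconv : ∀ x y : H,
      Tendsto (fun n : ℕ => (inner ℂ ((T ^ n) x) y : ℂ)) atTop (𝓝 (inner ℂ (P x) y)))
    (hnum : ∀ x : H, ‖(inner ℂ (T x) x : ℂ)‖ ≤ ‖x‖ ^ 2) :
    (P ∘L P = P ∧ ContinuousLinearMap.adjoint P = P ∧
      LinearMap.range (P : H →ₗ[ℂ] H) = LinearMap.ker ((1 - T : H →L[ℂ] H) : H →ₗ[ℂ] H)) ∧
    ((∀ x ∈ LinearMap.ker ((1 - T : H →L[ℂ] H) : H →ₗ[ℂ] H), T x ∈ LinearMap.ker ((1 - T : H →L[ℂ] H) : H →ₗ[ℂ] H)) ∧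
      (∀ x ∈ LinearMap.ker ((1 - T : H →L[ℂ] H) : H →ₗ[ℂ] H),
        ContinuousLinearMap.adjoint T x ∈ LinearMap.ker ((1 - T : H →L[ℂ] H) : H →ₗ[ℂ] H))) ∧
    LinearMap.ker ((1 - T : H →L[ℂ] H) : H →ₗ[ℂ] H) = LinearMap.ker ((1 - ContinuousLinearMap.adjoint T : H →L[ℂ] H) : H →ₗ[ℂ] H) := by
  have hP : WeakPowLimit T P := hconv
  have hfix (x : H) : adjoint T x = x ↔ T x = x :=
    adjoint_apply_eq_self_iff fun y => (RCLike.re_le_norm _).trans (hnum y)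
  refine ⟨⟨hP.comp_self, hP.adjoint_eq_self fun x => (hfix x).2, hP.range_eq_ker_one_sub⟩,
    ⟨fun x hx => ?_, fun x hx => ?_⟩, ?_⟩
  · rw [mem_ker_one_sub_iff] at hx ⊢
    rw [hx, hx]
  · rw [mem_ker_one_sub_iff] at hx ⊢
    rw [(hfix x).2 hx, hx]
  · ext x
    rw [mem_ker_one_sub_iff, mem_ker_one_sub_iff, hfix]
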